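/- Let N ≥ 1 and let M_1, …, M_n ∈ SE(N) be represented as (N+1)×(N+1) homogeneous matrices, let M ∈ ℝ^{(N+1)n×(N+1)} be their vertical stack, and let X ∈ ℝ^{(N+1)n×(N+1)n} be the block matrix whose (i,j)-th (N+1)×(N+1) block is M_i M_j⁻¹ (diagonal blocks equal to the identity). Then rank(X) = N+1 and X·M = n·M; that is, the N+1 columns of M are linearly independent eigenvectors of X associated with the eigenvalue n. -/
import Mathlib


open Matrix

noncomputable section

/-- Index type for (N+1)×(N+1) homogeneous matrices. -/
abbrev IdxN (N : ℕ) : Type := Fin N ⊕ Fin 1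

/-- The (N+1)×(N+1) homogeneous matrix `[[R, t],[0,1]]`. -/
def homogN (N : ℕ) (R : Matrix (Fin N) (Fin N) ℝ) (t : Fin N → ℝ) :
    Matrix (IdxN N) (IdxN N) ℝ :=
  Matrix.fromBlocks R (Matrix.of fun i (_ : Fin 1) => t i) 0 1

/-- `A` is an SE(N) element written as an (N+1)×(N+1) homogeneous matrix. -/
def IsSEN (N : ℕ) (A : Matrix (IdxN N) (IdxN N) ℝ) : Prop :=
  ∃ (R : Matrix (Fin N) (Fin N) ℝ) (t : Fin N → ℝ),
    Rᵀ * R = 1 ∧ R.det = 1 ∧ A = homogN N R t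

lemma IsSEN.det_eq_one {N : ℕ} {A : Matrix (IdxN N) (IdxN N) ℝ} (h : IsSEN N A) :
    A.det = 1 := by
  obtain ⟨R, t, _, hdet, rfl⟩ := h
  simp [homogN, Matrix.det_fromBlocks_zero₂₁, hdet]

/-- for `M_1, …, M_n ∈ SE(N)`, the block matrix `X` of relative
motions `M_i M_j⁻¹` has rank `N+1` and satisfies `X·M = n·M`, the `N+1` columns of
the stack `M` being linearly independent eigenvectors of `X` for the eigenvalue `n`. -/
theorem SEN_block_matrix_rank_and_eigen
    (N : ℕ) (hN : 1 ≤ N) (n : ℕ) (hn : 1 ≤ n)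
    (Ms : Fin n → Matrix (IdxN N) (IdxN N) ℝ) (hMs : ∀ i, IsSEN N (Ms i))
    (M : Matrix (Fin n × IdxN N) (IdxN N) ℝ)
    (hM : ∀ i r c, M (i, r) c = Ms i r c)
    (X : Matrix (Fin n × IdxN N) (Fin n × IdxN N) ℝ)
    (hX : ∀ i r j c, X (i, r) (j, c) = (Ms i * (Ms j)⁻¹) r c) :
    X.rank = N + 1 ∧
      X * M = (n : ℝ) • M ∧
      LinearIndependent ℝ (fun c : IdxN N => fun p : Fin n × IdxN N => M p c) := by
  have hdet : ∀ i, IsUnit (Ms i).det := fun i => by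
    rw [(hMs i).det_eq_one]; exact isUnit_one
  have hinv : ∀ i, (Ms i)⁻¹ * Ms i = 1 := fun i => nonsing_inv_mul _ (hdet i)
  set Y : Matrix (IdxN N) (Fin n × IdxN N) ℝ :=
    Matrix.of fun r p => (Ms p.1)⁻¹ r p.2 with hY
  have hXMY : X = M * Y := by
    ext ⟨i, r⟩ ⟨j, c⟩
    rw [hX]
    simp only [Matrix.mul_apply, hY, Matrix.of_apply, hM]
  have hYM : Y * M = (n : ℝ) • 1 := by
    ext r c
    simp only [Matrix.mul_apply, hY, Matrix.of_apply, Fintype.sum_prod_type]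
    have : ∀ j : Fin n, ∑ k : IdxN N, (Ms j)⁻¹ r k * M (j, k) c
        = (1 : Matrix (IdxN N) (IdxN N) ℝ) r c := by
      intro j
      rw [← hinv j, Matrix.mul_apply]
      exact Finset.sum_congr rfl fun k _ => by rw [hM]
    rw [Finset.sum_congr rfl (fun j _ => this j)]
    simp [Finset.card_univ, mul_comm]
  have hXM : X * M = (n : ℝ) • M := by
    rw [hXMY, Matrix.mul_assoc, hYM]
    simp [Matrix.mul_smul]
  have i0 : Fin n := ⟨0, hn⟩
  -- extraction matrix
  set E : Matrix (IdxN N) (Fin n × IdxN N) ℝ :=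
    Matrix.of fun r p => if p = (i0, r) then 1 else 0 with hE
  have hEM : E * M = Ms i0 := by
    ext r c
    simp only [Matrix.mul_apply, hE, Matrix.of_apply]
    rw [Finset.sum_eq_single (i0, r)]
    · simp [hM]
    · intro b _ hb; simp [hb]
    · simp
  have hcard : Fintype.card (IdxN N) = N + 1 := by simp [IdxN]
  have hrank : X.rank = N + 1 := by
    have h1 : X.rank ≤ N + 1 := by
      calc X.rank ≤ M.rank := hXMY ▸ rank_mul_le_left M Y
        _ ≤ Fintype.card (IdxN N) := rank_le_card_width M
        _ = N + 1 := hcard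
    have h2 : N + 1 ≤ X.rank := by
      have hMr : M.rank = N + 1 := by
        refine le_antisymm (le_of_le_of_eq (rank_le_card_width M) hcard) ?_
        calc N + 1 = (Ms i0).rank := by rw [rank_of_isUnit _ ((Matrix.isUnit_iff_isUnit_det _).mpr (hdet i0)), hcard]
          _ = (E * M).rank := by rw [hEM]
          _ ≤ M.rank := rank_mul_le_right E M
      have hsmul : ((n : ℝ) • M).rank = M.rank := by
        have : (n : ℝ) • M = ((n : ℝ) • (1 : Matrix (Fin n × IdxN N) (Fin n × IdxN N) ℝ)) * M := by
          simp [Matrix.smul_mul]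
        rw [this]
        apply rank_mul_eq_right_of_isUnit_det
        rw [Matrix.det_smul, Matrix.det_one]
        have : (n : ℝ) ≠ 0 := Nat.cast_ne_zero.mpr (Nat.one_le_iff_ne_zero.mp hn)
        simp [isUnit_iff_ne_zero, this]
      calc N + 1 = M.rank := hMr.symm
        _ = ((n : ℝ) • M).rank := hsmul.symm
        _ = (X * M).rank := by rw [hXM]
        _ ≤ X.rank := rank_mul_le_left X M
    exact le_antisymm h1 h2
  refine ⟨hrank, hXM, ?_⟩
  rw [Fintype.linearIndependent_iff]
  intro g hg c
  have hrow : ∀ r : IdxN N, (Ms i0 *ᵥ g) r = 0 := by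
    intro r
    have := congrFun hg (i0, r)
    simpa [Matrix.mulVec, dotProduct, hM, mul_comm] using this
  have : Ms i0 *ᵥ g = 0 := funext hrow
  have hg0 : g = 0 := by
    have := congrArg (fun v => (Ms i0)⁻¹ *ᵥ v) this
    simpa [Matrix.mulVec_mulVec, hinv i0] using this
  exact congrFun hg0 c
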